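/- arXiv:1109.3409 — 7 statements merged into one kernel-verified Lean document; each statement's English description precedes it below -/
import Mathlib

section
/- Let π : ℝ → ℝ be a probability density on ℝ that is symmetric (π(−θ) = π(θ) for all θ), continuously differentiable on (0,∞), nonincreasing on [0,∞), and satisfies π(t) → 0 and t·π(t) → 0 as t → ∞. Then for every θ ∈ ℝ with θ ≠ 0, π(θ) = ∫₀^∞ (1/(2t))·1{|θ| < t}·h(t) dt, where h(t) = −2t·π′(t). (Scale mixture of uniforms representation, Theorem 1.) -/
open MeasureTheory Set Filter Topology

/-!
For `θ ≠ 0` the integrand vanishes for `t ≤ |θ|` and equals `-π' t` for `t > |θ|`, so the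
right-hand side is `∫_{|θ|}^∞ -π'`. Since `π` is antitone, `π'` is nonpositive, hence integrable
on `(|θ|, ∞)` because `π` has a limit at infinity, and the fundamental theorem of calculus gives
`π |θ| - lim π = π |θ| = π θ`.
-/

theorem integral_Ioi_neg_deriv_of_antitoneOn {f : ℝ → ℝ} {a : ℝ}
    (hcont : ContinuousWithinAt f (Ici a) a) (hdiff : DifferentiableOn ℝ f (Ioi a))
    (hanti : AntitoneOn f (Ioi a)) (hf : Tendsto f atTop (𝓝 0)) :
    ∫ t in Ioi a, -deriv f t = f a := by
  have hderiv : ∀ t ∈ Ioi a, HasDerivAt f (deriv f t) t := fun t ht ↦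
    (hdiff.differentiableAt (isOpen_Ioi.mem_nhds ht)).hasDerivAt
  have hnonpos : ∀ t ∈ Ioi a, deriv f t ≤ 0 := fun t ht ↦ by
    rw [← derivWithin_of_isOpen isOpen_Ioi ht]
    exact hanti.derivWithin_nonpos
  rw [integral_neg, integral_Ioi_of_hasDerivAt_of_nonpos hcont hderiv hnonpos hf, zero_sub,
    neg_neg]

theorem scale_mixture_of_uniforms_general
    (π : ℝ → ℝ)
    (hsymm : ∀ x, π (-x) = π x)
    (hC1 : ContDiffOn ℝ 1 π (Ioi 0))
    (hmono : AntitoneOn π (Ici 0))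
    (hlim : Tendsto π atTop (nhds 0))
    (θ : ℝ) (hθ : θ ≠ 0) :
    π θ = ∫ t in Ioi (0 : ℝ),
      (1 / (2 * t)) * (if |θ| < t then (1 : ℝ) else 0) * (-2 * t * deriv π t) := by
  have hθ_pos : 0 < |θ| := abs_pos.mpr hθ
  have hsub : Ioi |θ| ⊆ Ioi 0 := Ioi_subset_Ioi hθ_pos.le
  have hdiff : DifferentiableOn ℝ π (Ioi 0) := hC1.differentiableOn one_ne_zero
  calc π θ = π |θ| := (abs_by_cases (fun x ↦ π x = π θ) rfl (hsymm θ)).symm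
    _ = ∫ t in Ioi |θ|, -deriv π t :=
      (integral_Ioi_neg_deriv_of_antitoneOn
        (hdiff.continuousOn.continuousAt (isOpen_Ioi.mem_nhds hθ_pos)).continuousWithinAt
        (hdiff.mono hsub) (hmono.mono (hsub.trans Ioi_subset_Ici_self)) hlim).symm
    _ = ∫ t in Ioi 0, (Ioi |θ|).indicator (fun t ↦ -deriv π t) t := by
      rw [setIntegral_indicator measurableSet_Ioi, inter_eq_right.mpr hsub]
    _ = _ := by
      refine setIntegral_congr_fun measurableSet_Ioi fun t (ht : 0 < t) ↦ ?_
      by_cases hθt : |θ| < t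
      · rw [indicator_of_mem (mem_Ioi.mpr hθt), if_pos hθt]
        field_simp
      · rw [indicator_of_notMem (notMem_Ioi.mpr (not_lt.mp hθt)), if_neg hθt]
        ring

/-- Scale mixture of uniforms representation (Theorem 1): a symmetric, unimodal,
continuously differentiable density `π` may be written as a scale mixture of uniform
distributions with mixing density `h t = -2 t π'(t)`. -/
theorem scale_mixture_of_uniforms
    (π : ℝ → ℝ)
    (hnonneg : ∀ x, 0 ≤ π x)
    (hint : Integrable π)
    (hnorm : (∫ x, π x) = 1)
    (hsymm : ∀ x, π (-x) = π x)
    (hC1 : ContDiffOn ℝ 1 π (Ioi 0))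
    (hmono : AntitoneOn π (Ici 0))
    (hlim : Tendsto π atTop (nhds 0))
    (hlim' : Tendsto (fun t => t * π t) atTop (nhds 0))
    (θ : ℝ) (hθ : θ ≠ 0) :
    π θ = ∫ t in Ioi (0 : ℝ),
      (1 / (2 * t)) * (if |θ| < t then (1 : ℝ) else 0) * (-2 * t * deriv π t) :=
  scale_mixture_of_uniforms_general π hsymm hC1 hmono hlim θ hθ
end

section
/- For every σ > 0, μ ∈ ℝ and x ∈ ℝ, the Gaussian density satisfies (1/(σ√(2π)))·exp(−(x−μ)²/(2σ²)) = ∫₀^∞ (1/(2σ√v))·1{|x−μ| < σ√v}·g(v) dv, where g(v) = v^{1/2}·e^{−v/2}/(2^{3/2}·Γ(3/2)) is the Gamma(3/2, 1/2) density (shape 3/2, rate 1/2). That is, a N(μ,σ²) random variable can be expressed as x | v ∼ Uniform(μ − σ√v, μ + σ√v) with v ∼ Gamma(3/2, 1/2). -/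
/-!
Since `(2 σ √v)⁻¹ · √v` does not depend on `v`, the mixture integrand is a constant times
`exp (-v / 2)` restricted to `{v | |x - μ| < σ √v} = Ioi ((x - μ)² / σ²)`. The tail integral
`∫_c^∞ exp (-v / 2) dv = 2 exp (-c / 2)` at `c = (x - μ)² / σ²` is the Gaussian kernel, and the constant
`2^{3/2} Γ(3/2) = √(2π)` is its normalisation.
-/

open MeasureTheory Set Real

lemma two_rpow_three_halves_mul_Gamma_three_halves :
    (2 : ℝ) ^ ((3 : ℝ) / 2) * Gamma (3 / 2) = √(2 * π) := by
  have hΓ : Gamma (3 / 2) = Gamma (1 / 2) / 2 := by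
    rw [show (3 / 2 : ℝ) = 1 / 2 + 1 by norm_num, Gamma_add_one (by norm_num)]
    ring
  have hpow : (2 : ℝ) ^ ((3 : ℝ) / 2) = 2 * √2 := by
    rw [show (3 : ℝ) / 2 = 1 + 1 / 2 by norm_num, rpow_add two_pos, rpow_one, ← sqrt_eq_rpow]
  rw [hΓ, hpow, Gamma_one_half_eq, sqrt_mul zero_le_two]
  ring

lemma abs_lt_mul_sqrt_iff {σ y v : ℝ} (hσ : 0 < σ) :
    |y| < σ * √v ↔ y ^ 2 / σ ^ 2 < v := by
  rw [mul_comm, ← div_lt_iff₀ hσ, lt_sqrt (div_nonneg (abs_nonneg y) hσ.le), div_pow, sq_abs]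

lemma uniform_mixture_integrand_eq_indicator {σ y v : ℝ} (hσ : 0 < σ) :
    1 / (2 * σ * √v) * (if |y| < σ * √v then (1 : ℝ) else 0) *
        (√v * exp (-v / 2) / ((2 : ℝ) ^ ((3 : ℝ) / 2) * Gamma (3 / 2))) =
      (Ioi (y ^ 2 / σ ^ 2)).indicator (fun v => exp (-v / 2) / (2 * σ * √(2 * π))) v := by
  rw [two_rpow_three_halves_mul_Gamma_three_halves]
  by_cases h : y ^ 2 / σ ^ 2 < v
  · have hv : 0 < v := (div_nonneg (sq_nonneg y) (sq_nonneg σ)).trans_lt h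
    rw [indicator_of_mem (mem_Ioi.mpr h), if_pos ((abs_lt_mul_sqrt_iff hσ).mpr h)]
    field_simp
  · rw [indicator_of_notMem (notMem_Ioi.mpr (not_lt.mp h)),
      if_neg (mt (abs_lt_mul_sqrt_iff hσ).mp h)]
    ring

lemma integral_exp_neg_half_Ioi (c : ℝ) : ∫ v in Ioi c, exp (-v / 2) = 2 * exp (-c / 2) := by
  have h := integral_exp_mul_Ioi (a := -1 / 2) (by norm_num) c
  simp only [show ∀ t : ℝ, -1 / 2 * t = -t / 2 from fun t => by ring] at h
  rw [h]
  ring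

/-- A Gaussian density is a scale mixture of uniforms: `x ∼ N(μ, σ²)` may be written
as `x | v ∼ Uniform(μ - σ√v, μ + σ√v)` with `v ∼ Gamma(3/2, 1/2)`. -/
theorem gaussian_scale_mixture_of_uniforms (σ μ x : ℝ) (hσ : 0 < σ) :
    (1 / (σ * Real.sqrt (2 * Real.pi))) * Real.exp (-(x - μ) ^ 2 / (2 * σ ^ 2)) =
      ∫ v in Ioi (0 : ℝ),
        (1 / (2 * σ * Real.sqrt v)) *
          (if |x - μ| < σ * Real.sqrt v then (1 : ℝ) else 0) *
          (Real.sqrt v * Real.exp (-v / 2) /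
            ((2 : ℝ) ^ ((3 : ℝ) / 2) * Real.Gamma (3 / 2))) := by
  have hc : 0 ≤ (x - μ) ^ 2 / σ ^ 2 := by positivity
  simp only [uniform_mixture_integrand_eq_indicator hσ]
  rw [setIntegral_indicator measurableSet_Ioi, Ioi_inter_Ioi, max_eq_right hc,
    integral_div, integral_exp_neg_half_Ioi]
  field_simp
end

section
/- For every q > 0, τ > 0 and θ ∈ ℝ with θ ≠ 0, the unnormalized exponential power density satisfies exp(−|θ|^q/τ^q) = ∫₀^∞ (1/(2t))·1{|θ| < t}·(2q·t^q/τ^q)·exp(−t^q/τ^q) dt. That is, the mixing density of the exponential power prior in its scale mixture of uniforms representation is proportional to t^q·exp(−t^q/τ^q) on (0,∞) (a generalized gamma density). -/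
/-!
On `t > 0` the integrand equals `1{|θ| < t}` times `q t^(q-1)/τ^q · exp(-t^q/τ^q)`, the derivative
of `-exp(-t^q/τ^q)`. Since `exp(-t^q/τ^q) → 0` as `t → ∞`, the fundamental theorem of calculus on
`(|θ|, ∞)` gives `exp(-|θ|^q/τ^q)`.
-/

open MeasureTheory Set Filter Topology

namespace Real

variable {q c : ℝ}

theorem hasDerivAt_exp_neg_rpow_div {x : ℝ} (hx : 0 < x) :
    HasDerivAt (fun t => -exp (-(t ^ q) / c)) (q * x ^ (q - 1) / c * exp (-(x ^ q) / c)) x := by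
  have h : HasDerivAt (fun t => -exp (-(t ^ q) / c))
      (-(exp (-(x ^ q) / c) * (-(q * x ^ (q - 1)) / c))) x :=
    (((hasDerivAt_rpow_const (Or.inl hx.ne')).neg.div_const c).exp).neg
  convert h using 1
  ring

theorem tendsto_exp_neg_rpow_div_atTop (hq : 0 < q) (hc : 0 < c) :
    Tendsto (fun t => exp (-(t ^ q) / c)) atTop (𝓝 0) := by
  refine tendsto_exp_atBot.comp ?_
  simp_rw [neg_div]
  exact tendsto_neg_atTop_atBot.comp ((tendsto_rpow_atTop hq).atTop_div_const hc)

theorem integral_Ioi_rpow_mul_exp_neg_rpow_div (hq : 0 < q) (hc : 0 < c) {a : ℝ} (ha : 0 ≤ a) :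
    ∫ x in Ioi a, q * x ^ (q - 1) / c * exp (-(x ^ q) / c) = exp (-(a ^ q) / c) := by
  have hcont : ContinuousWithinAt (fun t => -exp (-(t ^ q) / c)) (Ici a) a :=
    ((((continuousAt_rpow_const a q (Or.inr hq.le)).neg.div_const c).rexp).neg).continuousWithinAt
  have hpos : ∀ x ∈ Ioi a, 0 ≤ q * x ^ (q - 1) / c * exp (-(x ^ q) / c) := fun x hx => by
    have := rpow_pos_of_pos (ha.trans_lt hx) (q - 1)
    positivity
  rw [integral_Ioi_of_hasDerivAt_of_nonneg hcont
    (fun x hx => hasDerivAt_exp_neg_rpow_div (ha.trans_lt hx)) hpos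
    (by simpa using (tendsto_exp_neg_rpow_div_atTop hq hc).neg)]
  ring

end Real

theorem one_div_two_mul_ite_mul_rpow_exp_eq_indicator {q c a t : ℝ} (ht : 0 < t) :
    (1 / (2 * t)) * (if a < t then (1 : ℝ) else 0) * ((2 * q * t ^ q / c) * Real.exp (-(t ^ q) / c))
      = (Ioi a).indicator (fun x => q * x ^ (q - 1) / c * Real.exp (-(x ^ q) / c)) t := by
  by_cases h : a < t
  · rw [if_pos h, indicator_of_mem (mem_Ioi.2 h), Real.rpow_sub_one ht.ne']
    field_simp
  · rw [if_neg h, indicator_of_notMem (by simpa using h), mul_zero, zero_mul]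

theorem exponential_power_scale_mixture_of_uniforms_general
    (q τ θ : ℝ) (hq : 0 < q) (hτ : 0 < τ) :
    Real.exp (-(|θ| ^ q) / τ ^ q) =
      ∫ t in Ioi (0 : ℝ),
        (1 / (2 * t)) * (if |θ| < t then (1 : ℝ) else 0) *
          ((2 * q * t ^ q / τ ^ q) * Real.exp (-(t ^ q) / τ ^ q)) := by
  rw [setIntegral_congr_fun measurableSet_Ioi fun t ht => one_div_two_mul_ite_mul_rpow_exp_eq_indicator ht,
    setIntegral_indicator measurableSet_Ioi, Ioi_inter_Ioi, max_eq_right (abs_nonneg θ),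
    Real.integral_Ioi_rpow_mul_exp_neg_rpow_div hq (Real.rpow_pos_of_pos hτ q) (abs_nonneg θ)]

/-- The (unnormalized) exponential power density `exp(-|θ|^q/τ^q)` is a scale mixture
of uniforms with mixing density proportional to `t^q exp(-t^q/τ^q)` on `(0, ∞)`. -/
theorem exponential_power_scale_mixture_of_uniforms
    (q τ θ : ℝ) (hq : 0 < q) (hτ : 0 < τ) (hθ : θ ≠ 0) :
    Real.exp (-(|θ| ^ q) / τ ^ q) =
      ∫ t in Ioi (0 : ℝ),
        (1 / (2 * t)) * (if |θ| < t then (1 : ℝ) else 0) *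
          ((2 * q * t ^ q / τ ^ q) * Real.exp (-(t ^ q) / τ ^ q)) :=
  exponential_power_scale_mixture_of_uniforms_general q τ θ hq hτ
end

section
/- For every ν > 0, τ > 0 and θ ∈ ℝ with θ ≠ 0, the unnormalized Student-t density satisfies (1 + θ²/τ²)^{−(ν+1)/2} = ∫₀^∞ (1/(2t))·1{|θ| < t}·((ν+1)·2t²/τ²)·(1 + t²/τ²)^{−(ν+3)/2} dt. That is, the mixing density of the Student-t prior in its scale mixture of uniforms representation is proportional to t²·(1 + t²/τ²)^{−(ν+3)/2} on (0,∞). -/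
open MeasureTheory Set Filter Topology

/-! The integrand vanishes below `|θ|` and, above it, the factor `1/(2t)` cancels one power of `t`,
leaving `(ν+1) t/τ² · (1 + t²/τ²)^{-(ν+3)/2}`, the derivative of `-(1 + t²/τ²)^{-(ν+1)/2}`.
Since the latter tends to `0` at infinity, the integral over `(|θ|, ∞)` is `(1 + θ²/τ²)^{-(ν+1)/2}`. -/

theorem hasDerivAt_one_add_sq_div_sq_rpow (p τ t : ℝ) :
    HasDerivAt (fun t : ℝ => (1 + t ^ 2 / τ ^ 2) ^ p)
      (p * (2 * t / τ ^ 2) * (1 + t ^ 2 / τ ^ 2) ^ (p - 1)) t := by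
  have hbase : HasDerivAt (fun t : ℝ => 1 + t ^ 2 / τ ^ 2) (2 * t / τ ^ 2) t := by
    simpa using ((hasDerivAt_pow 2 t).div_const (τ ^ 2)).const_add 1
  convert hbase.rpow_const (Or.inl (by positivity)) using 1
  ring

theorem tendsto_one_add_sq_div_sq_rpow_neg_atTop {p τ : ℝ} (hp : 0 < p) (hτ : τ ≠ 0) :
    Tendsto (fun t : ℝ => (1 + t ^ 2 / τ ^ 2) ^ (-p)) atTop (𝓝 0) := by
  have hbase : Tendsto (fun t : ℝ => 1 + t ^ 2 / τ ^ 2) atTop atTop :=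
    tendsto_atTop_add_const_left _ 1
      ((tendsto_pow_atTop two_ne_zero).atTop_div_const (by positivity))
  exact (tendsto_rpow_neg_atTop hp).comp hbase

theorem integral_Ioi_mul_one_add_sq_div_sq_rpow {p τ a : ℝ} (hp : 0 < p) (hτ : τ ≠ 0)
    (ha : 0 ≤ a) :
    ∫ t in Ioi a, 2 * p * t / τ ^ 2 * (1 + t ^ 2 / τ ^ 2) ^ (-p - 1) =
      (1 + a ^ 2 / τ ^ 2) ^ (-p) := by
  have hderiv : ∀ t ∈ Ici a, HasDerivAt (fun t : ℝ => -(1 + t ^ 2 / τ ^ 2) ^ (-p))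
      (2 * p * t / τ ^ 2 * (1 + t ^ 2 / τ ^ 2) ^ (-p - 1)) t := fun t _ =>
    (hasDerivAt_one_add_sq_div_sq_rpow (-p) τ t).fun_neg.congr_deriv (by ring)
  have hnonneg : ∀ t ∈ Ioi a, 0 ≤ 2 * p * t / τ ^ 2 * (1 + t ^ 2 / τ ^ 2) ^ (-p - 1) :=
    fun t ht => by
      have : 0 ≤ t := ha.trans ht.le
      positivity
  have hlim := (tendsto_one_add_sq_div_sq_rpow_neg_atTop hp hτ).neg
  rw [neg_zero] at hlim
  rw [integral_Ioi_of_hasDerivAt_of_nonneg' hderiv hnonneg hlim]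
  ring

theorem setIntegral_Ioi_zero_ite_lt {a : ℝ} (ha : 0 ≤ a) (f : ℝ → ℝ) :
    ∫ t in Ioi (0 : ℝ), (if a < t then f t else 0) = ∫ t in Ioi a, f t := by
  have h := setIntegral_indicator (μ := volume) (s := Ioi (0 : ℝ)) (t := Ioi a) (f := f)
    measurableSet_Ioi
  rwa [Ioi_inter_Ioi, max_eq_right ha] at h

theorem student_t_scale_mixture_of_uniforms_general
    (ν τ θ : ℝ) (hν : 0 < ν) (hτ : 0 < τ) :
    (1 + θ ^ 2 / τ ^ 2) ^ (-(ν + 1) / 2) =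
      ∫ t in Ioi (0 : ℝ),
        (1 / (2 * t)) * (if |θ| < t then (1 : ℝ) else 0) *
          ((ν + 1) * 2 * t ^ 2 / τ ^ 2 * (1 + t ^ 2 / τ ^ 2) ^ (-(ν + 3) / 2)) := by
  have htail := integral_Ioi_mul_one_add_sq_div_sq_rpow (p := (ν + 1) / 2)
    (by positivity) hτ.ne' (abs_nonneg θ)
  rw [sq_abs, ← setIntegral_Ioi_zero_ite_lt (abs_nonneg θ)] at htail
  rw [show -(ν + 1) / 2 = -((ν + 1) / 2) by ring, ← htail]
  refine setIntegral_congr_fun measurableSet_Ioi fun t (ht : 0 < t) => ?_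
  split_ifs
  · rw [show -((ν + 1) / 2) - 1 = -(ν + 3) / 2 by ring]
    field_simp
  · simp

/-- The (unnormalized) Student-t density `(1 + θ²/τ²)^{-(ν+1)/2}` is a scale mixture
of uniforms with mixing density proportional to `t²(1 + t²/τ²)^{-(ν+3)/2}` on `(0, ∞)`. -/
theorem student_t_scale_mixture_of_uniforms
    (ν τ θ : ℝ) (hν : 0 < ν) (hτ : 0 < τ) (hθ : θ ≠ 0) :
    (1 + θ ^ 2 / τ ^ 2) ^ (-(ν + 1) / 2) =
      ∫ t in Ioi (0 : ℝ),
        (1 / (2 * t)) * (if |θ| < t then (1 : ℝ) else 0) *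
          ((ν + 1) * 2 * t ^ 2 / τ ^ 2 * (1 + t ^ 2 / τ ^ 2) ^ (-(ν + 3) / 2)) :=
  student_t_scale_mixture_of_uniforms_general ν τ θ hν hτ
end

section
/- For every α > 0, τ > 0 and θ ∈ ℝ with θ ≠ 0, the unnormalized generalized double Pareto density satisfies (1 + |θ|/τ)^{−(1+α)} = ∫₀^∞ (1/(2t))·1{|θ| < t}·(2t·(1+α)/τ)·(1 + t/τ)^{−(2+α)} dt. That is, the mixing density of the generalized double Pareto prior in its scale mixture of uniforms representation is proportional to t·(1 + t/τ)^{−(2+α)} on (0,∞). -/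
open MeasureTheory Set Filter Topology

/-!
Only the factor `t` of the mixing density survives against the uniform density `1/(2t)` on
`(-t, t)`, so the integral is `∫_{|θ|}^∞ ((1+α)/τ) (1 + t/τ)^{-(2+α)} dt`, whose integrand is the
derivative of `-(1 + t/τ)^{-(1+α)}`; this antiderivative vanishes at infinity.
-/

theorem hasDerivAt_neg_one_add_div_rpow_neg {τ p x : ℝ} (hx : 0 < 1 + x / τ) :
    HasDerivAt (fun t => -(1 + t / τ) ^ (-p)) (p / τ * (1 + x / τ) ^ (-(p + 1))) x := by
  have hlin : HasDerivAt (fun t : ℝ => 1 + t / τ) (1 / τ) x := by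
    simpa using ((hasDerivAt_id x).div_const τ).const_add 1
  refine (hlin.rpow_const (p := -p) (Or.inl hx.ne')).neg.congr_deriv ?_
  rw [show -p - 1 = -(p + 1) by ring]
  ring

theorem integral_Ioi_one_add_div_rpow_neg {τ p a : ℝ} (hτ : 0 < τ) (hp : 0 < p) (ha : -τ < a) :
    ∫ t in Ioi a, p / τ * (1 + t / τ) ^ (-(p + 1)) = (1 + a / τ) ^ (-p) := by
  have hbase : ∀ x ∈ Ici a, 0 < 1 + x / τ := fun x hx => by
    have : -1 < x / τ := by rw [lt_div_iff₀ hτ]; linarith [mem_Ici.mp hx]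
    linarith
  have hderiv : ∀ x ∈ Ici a,
      HasDerivAt (fun t => -(1 + t / τ) ^ (-p)) (p / τ * (1 + x / τ) ^ (-(p + 1))) x :=
    fun x hx => hasDerivAt_neg_one_add_div_rpow_neg (hbase x hx)
  have hnonneg : ∀ x ∈ Ioi a, 0 ≤ p / τ * (1 + x / τ) ^ (-(p + 1)) := fun x hx => by
    have := hbase x (mem_Ici_of_Ioi hx)
    positivity
  have hlim : Tendsto (fun t => -(1 + t / τ) ^ (-p)) atTop (𝓝 0) := by
    have hlin : Tendsto (fun t : ℝ => 1 + t / τ) atTop atTop :=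
      tendsto_atTop_add_const_left _ 1 (tendsto_id.atTop_div_const hτ)
    simpa using ((tendsto_rpow_neg_atTop hp).comp hlin).neg
  rw [integral_Ioi_of_hasDerivAt_of_nonneg (hderiv a self_mem_Ici).continuousAt.continuousWithinAt
    (fun x hx => hderiv x (mem_Ici_of_Ioi hx)) hnonneg hlim]
  ring

theorem gdp_scale_mixture_of_uniforms_general
    (α τ θ : ℝ) (hα : 0 < α) (hτ : 0 < τ) :
    (1 + |θ| / τ) ^ (-(1 + α)) =
      ∫ t in Ioi (0 : ℝ),
        (1 / (2 * t)) * (if |θ| < t then (1 : ℝ) else 0) *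
          ((2 * t * (1 + α) / τ) * (1 + t / τ) ^ (-(2 + α))) := by
  have hcancel : ∀ t ∈ Ioi (0 : ℝ),
      (1 / (2 * t)) * (if |θ| < t then (1 : ℝ) else 0) *
          ((2 * t * (1 + α) / τ) * (1 + t / τ) ^ (-(2 + α)))
        = (Ioi |θ|).indicator (fun t => (1 + α) / τ * (1 + t / τ) ^ (-((1 + α) + 1))) t := by
    intro t ht
    rw [show -(2 + α) = -((1 + α) + 1) by ring]
    simp only [indicator_apply, mem_Ioi]
    split_ifs
    · field_simp [(mem_Ioi.mp ht).ne']
    · ring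
  rw [setIntegral_congr_fun measurableSet_Ioi hcancel, setIntegral_indicator measurableSet_Ioi,
    inter_eq_self_of_subset_right (Ioi_subset_Ioi (abs_nonneg θ)),
    integral_Ioi_one_add_div_rpow_neg hτ (by linarith) (by linarith [abs_nonneg θ])]

/-- The (unnormalized) generalized double Pareto density `(1 + |θ|/τ)^{-(1+α)}` is a
scale mixture of uniforms with mixing density proportional to `t(1 + t/τ)^{-(2+α)}`
on `(0, ∞)`. -/
theorem gdp_scale_mixture_of_uniforms
    (α τ θ : ℝ) (hα : 0 < α) (hτ : 0 < τ) (hθ : θ ≠ 0) :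
    (1 + |θ| / τ) ^ (-(1 + α)) =
      ∫ t in Ioi (0 : ℝ),
        (1 / (2 * t)) * (if |θ| < t then (1 : ℝ) else 0) *
          ((2 * t * (1 + α) / τ) * (1 + t / τ) ^ (-(2 + α))) :=
  gdp_scale_mixture_of_uniforms_general α τ θ hα hτ
end

section
/- For every τ > 0, the normalized logarithmic prior density π(θ) = (1/(2πτ))·log(1 + τ²/θ²) on ℝ admits the scale mixture of uniforms representation π(θ) = ∫₀^∞ (1/(2t))·1{|θ| < t}·h(t) dt for all θ ≠ 0, where h(t) = (2/(πτ))·(1 + t²/τ²)^{−1} is the standard half-Cauchy density with scale τ on (0,∞). Equivalently, for all θ ≠ 0, log(1 + τ²/θ²) = ∫_{|θ|}^∞ 2τ²/(t·(t² + τ²)) dt. -/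
open MeasureTheory Set Filter Topology

/-!
Since `d/dt (-log (1 + τ²/t²)) = 2τ²/(t(t² + τ²))` and `log (1 + τ²/t²) → 0` as `t → ∞`, the tail
integral of `2τ²/(t(t² + τ²))` from `|θ|` is `log (1 + τ²/θ²)`. The uniform kernel `1/(2t)` times
the half-Cauchy density is `1/(2πτ)` times this integrand, and the indicator `1{|θ| < t}`
cuts `Ioi 0` down to `Ioi |θ|`.
-/

theorem hasDerivAt_neg_log_one_add_sq_div_sq (τ : ℝ) {t : ℝ} (ht : t ≠ 0) :
    HasDerivAt (fun t => -Real.log (1 + τ ^ 2 / t ^ 2)) (2 * τ ^ 2 / (t * (t ^ 2 + τ ^ 2))) t := by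
  have hpos : 0 < 1 + τ ^ 2 / t ^ 2 := by positivity
  refine ((((hasDerivAt_const t (τ ^ 2)).fun_div (hasDerivAt_pow 2 t)
    (pow_ne_zero 2 ht)).const_add 1).log hpos.ne').fun_neg.congr_deriv ?_
  push_cast
  field_simp
  ring

theorem tendsto_log_one_add_sq_div_sq_atTop (τ : ℝ) :
    Tendsto (fun t : ℝ => Real.log (1 + τ ^ 2 / t ^ 2)) atTop (𝓝 0) := by
  have hquot : Tendsto (fun t : ℝ => 1 + τ ^ 2 / t ^ 2) atTop (𝓝 1) := by
    simpa using (tendsto_const_nhds.div_atTop (tendsto_pow_atTop two_ne_zero)).const_add (1 : ℝ)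
  simpa using hquot.log one_ne_zero

theorem integral_Ioi_two_mul_sq_div_mul_sq_add_sq (τ : ℝ) {a : ℝ} (ha : 0 < a) :
    ∫ t in Ioi a, 2 * τ ^ 2 / (t * (t ^ 2 + τ ^ 2)) = Real.log (1 + τ ^ 2 / a ^ 2) := by
  have h := integral_Ioi_of_hasDerivAt_of_nonneg' (a := a) (l := 0)
    (fun t ht => hasDerivAt_neg_log_one_add_sq_div_sq τ (ha.trans_le ht).ne')
    (fun t ht => by have : 0 < t := ha.trans ht; positivity)
    (by simpa using (tendsto_log_one_add_sq_div_sq_atTop τ).neg)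
  rw [h, zero_sub, neg_neg]

theorem one_div_two_mul_mul_halfCauchy (t : ℝ) {τ : ℝ} (hτ : τ ≠ 0) :
    1 / (2 * t) * (2 / (Real.pi * τ) * (1 + t ^ 2 / τ ^ 2)⁻¹) =
      1 / (2 * Real.pi * τ) * (2 * τ ^ 2 / (t * (t ^ 2 + τ ^ 2))) := by
  rw [show 1 + t ^ 2 / τ ^ 2 = (τ ^ 2 + t ^ 2) / τ ^ 2 by field_simp, inv_div]
  field_simp
  ring

/-- The normalized logarithmic prior `π(θ) = (1/(2πτ)) log(1 + τ²/θ²)` is a scale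
mixture of uniforms whose mixing density is the half-Cauchy density with scale `τ`;
equivalently `log(1 + τ²/θ²) = ∫_{|θ|}^∞ 2τ²/(t(t² + τ²)) dt`. -/
theorem logarithmic_prior_scale_mixture_of_uniforms
    (τ : ℝ) (hτ : 0 < τ) (θ : ℝ) (hθ : θ ≠ 0) :
    ((1 / (2 * Real.pi * τ)) * Real.log (1 + τ ^ 2 / θ ^ 2) =
        ∫ t in Ioi (0 : ℝ),
          (1 / (2 * t)) * (if |θ| < t then (1 : ℝ) else 0) *
            ((2 / (Real.pi * τ)) * (1 + t ^ 2 / τ ^ 2)⁻¹)) ∧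
      Real.log (1 + τ ^ 2 / θ ^ 2) =
        ∫ t in Ioi |θ|, 2 * τ ^ 2 / (t * (t ^ 2 + τ ^ 2)) := by
  have htail := integral_Ioi_two_mul_sq_div_mul_sq_add_sq τ (abs_pos.2 hθ)
  rw [sq_abs] at htail
  refine ⟨?_, htail.symm⟩
  have hintegrand : (fun t => 1 / (2 * t) * (if |θ| < t then (1 : ℝ) else 0) *
      (2 / (Real.pi * τ) * (1 + t ^ 2 / τ ^ 2)⁻¹)) =
      (Ioi |θ|).indicator fun t => 1 / (2 * Real.pi * τ) * (2 * τ ^ 2 / (t * (t ^ 2 + τ ^ 2))) := by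
    ext t
    by_cases h : |θ| < t
    · rw [indicator_of_mem (mem_Ioi.2 h), if_pos h, mul_one,
        one_div_two_mul_mul_halfCauchy t hτ.ne']
    · rw [indicator_of_notMem (notMem_Ioi.2 (not_lt.1 h)), if_neg h, mul_zero, zero_mul]
  rw [hintegrand, setIntegral_indicator measurableSet_Ioi, Ioi_inter_Ioi,
    max_eq_right (abs_nonneg θ), integral_const_mul, htail]
end

section
/- For every τ > 0, the function θ ↦ log(1 + τ²/θ²) is integrable on ℝ and ∫_{−∞}^{∞} log(1 + τ²/θ²) dθ = 2πτ. Consequently, the logarithmic prior π(θ) = (1/(2πτ))·log(1 + τ²/θ²) is a probability density on ℝ. -/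
/-!
On `(0, ∞)` the function `log (1 + τ²/θ²)` is the derivative of
`F θ = θ (log (θ² + τ²) - log θ²) + 2τ arctan (θ/τ)`, which is continuous at `0` with `F 0 = 0`
and tends to `πτ` at infinity. Since the derivative is nonnegative, this gives integrability and
the value `πτ` on the half-line, and evenness doubles it.
-/

open MeasureTheory Set Filter Topology Real

theorem integrable_comp_abs_of_integrableOn_Ioi {E : Type*} [NormedAddCommGroup E]
    {f : ℝ → E} (hf : IntegrableOn f (Ioi 0)) : Integrable fun x => f |x| := by
  have hIoi : IntegrableOn (fun x => f |x|) (Ioi 0) :=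
    hf.congr_fun (fun x hx => by rw [abs_of_pos (mem_Ioi.mp hx)]) measurableSet_Ioi
  have hIic : IntegrableOn (fun x => f |x|) (Iic 0) := by
    let m : MeasurableEmbedding fun x : ℝ => -x := (Homeomorph.neg ℝ).measurableEmbedding
    rw [← Measure.map_neg_eq_self (volume : Measure ℝ), m.integrableOn_map_iff]
    simp_rw [Function.comp_def, abs_neg, neg_preimage, neg_Iic, neg_zero]
    exact (integrableOn_Ici_iff_integrableOn_Ioi).2 hIoi
  simpa only [Iic_union_Ioi, integrableOn_univ] using hIic.union hIoi

namespace LogPrior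

theorem log_one_add_sq_div_sq_nonneg (τ θ : ℝ) : 0 ≤ log (1 + τ ^ 2 / θ ^ 2) :=
  log_nonneg (le_add_of_nonneg_right (by positivity))

theorem log_one_add_sq_div_sq_abs (τ θ : ℝ) :
    log (1 + τ ^ 2 / |θ| ^ 2) = log (1 + τ ^ 2 / θ ^ 2) := by
  rw [sq_abs]

theorem log_one_add_sq_div_sq_eq {τ θ : ℝ} (hθ : θ ≠ 0) :
    log (1 + τ ^ 2 / θ ^ 2) = log (θ ^ 2 + τ ^ 2) - log (θ ^ 2) := by
  have hθ2 : θ ^ 2 ≠ 0 := pow_ne_zero 2 hθ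
  rw [← log_div (by positivity) hθ2, add_div, div_self hθ2]

/-- Written with `log (θ² + τ²) - log θ²` rather than `log (1 + τ²/θ²)` so that continuity at `0`
reduces to that of `x log x`. -/
noncomputable def antideriv (τ θ : ℝ) : ℝ :=
  θ * (log (θ ^ 2 + τ ^ 2) - log (θ ^ 2)) + 2 * τ * arctan (θ / τ)

theorem continuous_antideriv {τ : ℝ} (hτ : τ ≠ 0) : Continuous (antideriv τ) := by
  have hlog : Continuous fun θ : ℝ => log (θ ^ 2 + τ ^ 2) :=
    ((continuous_pow 2).add continuous_const).log fun θ =>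
      (add_pos_of_nonneg_of_pos (sq_nonneg θ) (sq_pos_of_ne_zero hτ)).ne'
  have hmul_log_sq : (fun θ : ℝ => θ * log (θ ^ 2)) = fun θ => 2 * (θ * log θ) := by
    ext θ
    rw [log_pow]
    push_cast
    ring
  have hmul_log : Continuous fun θ : ℝ => θ * log (θ ^ 2) := by
    rw [hmul_log_sq]
    exact continuous_const.mul continuous_mul_log
  have hsplit : antideriv τ =
      fun θ => θ * log (θ ^ 2 + τ ^ 2) - θ * log (θ ^ 2) + 2 * τ * arctan (θ / τ) := by
    ext θ
    rw [antideriv, mul_sub]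
  rw [hsplit]
  fun_prop

theorem hasDerivAt_antideriv {τ θ : ℝ} (hτ : τ ≠ 0) (hθ : θ ≠ 0) :
    HasDerivAt (antideriv τ) (log (1 + τ ^ 2 / θ ^ 2)) θ := by
  have hsum : θ ^ 2 + τ ^ 2 ≠ 0 := by positivity
  have hsq : θ ^ 2 ≠ 0 := pow_ne_zero 2 hθ
  have hlog_sum : HasDerivAt (fun x : ℝ => log (x ^ 2 + τ ^ 2)) (2 * θ / (θ ^ 2 + τ ^ 2)) θ := by
    simpa using ((hasDerivAt_pow 2 θ).add_const (τ ^ 2)).log hsum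
  have hlog_sq : HasDerivAt (fun x : ℝ => log (x ^ 2)) (2 * θ / θ ^ 2) θ := by
    simpa using (hasDerivAt_pow 2 θ).log hsq
  have harctan : HasDerivAt (fun x : ℝ => arctan (x / τ)) (1 / (1 + (θ / τ) ^ 2) * (1 / τ)) θ :=
    ((hasDerivAt_id' θ).div_const τ).arctan
  refine (((hasDerivAt_id' θ).mul (hlog_sum.sub hlog_sq)).add
    (harctan.const_mul (2 * τ))).congr_deriv ?_
  -- the rational terms `2θ²/(θ²+τ²) - 2 + 2τ²/(θ²+τ²)` cancel
  have hrational : θ * (2 * θ / (θ ^ 2 + τ ^ 2) - 2 * θ / θ ^ 2) +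
      2 * τ * (1 / (1 + (θ / τ) ^ 2) * (1 / τ)) = 0 := by
    rw [show 1 + (θ / τ) ^ 2 = (θ ^ 2 + τ ^ 2) / τ ^ 2 by field_simp; ring]
    field_simp
    ring
  rw [Pi.sub_apply, one_mul, add_assoc, hrational, add_zero, log_one_add_sq_div_sq_eq hθ]

theorem tendsto_antideriv_atTop {τ : ℝ} (hτ : 0 < τ) :
    Tendsto (antideriv τ) atTop (𝓝 (π * τ)) := by
  have hlog_part : Tendsto (fun θ : ℝ => θ * (log (θ ^ 2 + τ ^ 2) - log (θ ^ 2))) atTop (𝓝 0) := by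
    have hsq : Tendsto (fun θ : ℝ => θ ^ 2 * log (1 + τ ^ 2 / θ ^ 2)) atTop (𝓝 (τ ^ 2)) :=
      (tendsto_mul_log_one_add_div_atTop (τ ^ 2)).comp (tendsto_pow_atTop two_ne_zero)
    have hdiv := tendsto_inv_atTop_zero.mul hsq
    rw [zero_mul] at hdiv
    refine hdiv.congr' ?_
    filter_upwards [eventually_gt_atTop 0] with θ hθ
    rw [log_one_add_sq_div_sq_eq hθ.ne']
    field_simp
  have harctan : Tendsto (fun θ : ℝ => 2 * τ * arctan (θ / τ)) atTop (𝓝 (2 * τ * (π / 2))) :=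
    ((tendsto_nhds_of_tendsto_nhdsWithin tendsto_arctan_atTop).comp
      (tendsto_id.atTop_div_const hτ)).const_mul _
  have h := hlog_part.add harctan
  rwa [zero_add, show 2 * τ * (π / 2) = π * τ by ring] at h

theorem integrableOn_Ioi {τ : ℝ} (hτ : 0 < τ) :
    IntegrableOn (fun θ : ℝ => log (1 + τ ^ 2 / θ ^ 2)) (Ioi 0) :=
  integrableOn_Ioi_deriv_of_nonneg (continuous_antideriv hτ.ne').continuousWithinAt
    (fun _ hθ => hasDerivAt_antideriv hτ.ne' (ne_of_gt hθ))
    (fun θ _ => log_one_add_sq_div_sq_nonneg τ θ) (tendsto_antideriv_atTop hτ)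

theorem integral_Ioi {τ : ℝ} (hτ : 0 < τ) :
    ∫ θ in Ioi (0 : ℝ), log (1 + τ ^ 2 / θ ^ 2) = π * τ := by
  have h := integral_Ioi_of_hasDerivAt_of_nonneg (continuous_antideriv hτ.ne').continuousWithinAt
    (fun _ hθ => hasDerivAt_antideriv hτ.ne' (ne_of_gt hθ))
    (fun θ _ => log_one_add_sq_div_sq_nonneg τ θ) (tendsto_antideriv_atTop hτ)
  simpa [antideriv] using h

end LogPrior

open LogPrior in
/-- The function `θ ↦ log(1 + τ²/θ²)` is integrable on `ℝ` with total integral `2πτ`;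
consequently the logarithmic prior `π(θ) = (1/(2πτ)) log(1 + τ²/θ²)` is a probability
density on `ℝ`. -/
theorem logarithmic_prior_is_probability_density (τ : ℝ) (hτ : 0 < τ) :
    Integrable (fun θ : ℝ => Real.log (1 + τ ^ 2 / θ ^ 2)) ∧
      (∫ θ : ℝ, Real.log (1 + τ ^ 2 / θ ^ 2)) = 2 * Real.pi * τ ∧
      (∀ θ : ℝ, 0 ≤ (1 / (2 * Real.pi * τ)) * Real.log (1 + τ ^ 2 / θ ^ 2)) ∧
      (∫ θ : ℝ, (1 / (2 * Real.pi * τ)) * Real.log (1 + τ ^ 2 / θ ^ 2)) = 1 := by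
  have hintegrable : Integrable fun θ : ℝ => log (1 + τ ^ 2 / θ ^ 2) := by
    simpa only [log_one_add_sq_div_sq_abs] using
      integrable_comp_abs_of_integrableOn_Ioi (integrableOn_Ioi hτ)
  have hintegral : ∫ θ : ℝ, log (1 + τ ^ 2 / θ ^ 2) = 2 * π * τ := by
    rw [← integral_congr_ae (ae_of_all _ (log_one_add_sq_div_sq_abs τ)),
      integral_comp_abs (f := fun θ => log (1 + τ ^ 2 / θ ^ 2)), integral_Ioi hτ, mul_assoc]
  refine ⟨hintegrable, hintegral, fun θ => ?_, ?_⟩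
  · have := log_one_add_sq_div_sq_nonneg τ θ
    positivity
  · rw [integral_const_mul, hintegral, one_div_mul_cancel (by positivity)]
end
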